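/- Under the exact-power tail condition with β_x := ρ_x − (p+1), for every integer k ≥ 1 the moments of the FDH estimation error satisfy E[{φ(x) − φ̂_1(x)}^k] = k(β_x + p + 1)^{-1}(nℓ_x)^{-k/(β_x+p+1)} Γ(k(β_x + p + 1)^{-1}) + o(n^{-k/(β_x+p+1)}) as n → ∞, where Γ is the gamma function. -/

import Mathlib

open MeasureTheory ProbabilityTheory Filter Set Asymptotics Topology

noncomputable section

namespace FrontierEV

variable {Ω : Type*} [MeasureSpace Ω] {p : ℕ}

/-- Joint distribution function `F(x,y) = P(X ≤ x, Y ≤ y)` of the pair `(X 0, Y 0)`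
(inequalities on `Fin p → ℝ` are componentwise). -/
def jointF (X : ℕ → Ω → (Fin p → ℝ)) (Y : ℕ → Ω → ℝ) (x : Fin p → ℝ) (y : ℝ) : ℝ :=
  (ℙ {ω | X 0 ω ≤ x ∧ Y 0 ω ≤ y}).toReal

/-- Marginal distribution function `F_X(x) = P(X ≤ x)`. -/
def margF (X : ℕ → Ω → (Fin p → ℝ)) (x : Fin p → ℝ) : ℝ :=
  (ℙ {ω | X 0 ω ≤ x}).toReal

/-- Conditional distribution function `F(y|x) = F(x,y)/F_X(x)` of `Y` given `X ≤ x`. -/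
def condF (X : ℕ → Ω → (Fin p → ℝ)) (Y : ℕ → Ω → ℝ) (x : Fin p → ℝ) (y : ℝ) : ℝ :=
  jointF X Y x y / margF X x

/-- The frontier function `φ(x) = sup {y ≥ 0 : F(y|x) < 1}`. -/
def phi (X : ℕ → Ω → (Fin p → ℝ)) (Y : ℕ → Ω → ℝ) (x : Fin p → ℝ) : ℝ :=
  sSup {y : ℝ | 0 ≤ y ∧ condF X Y x y < 1}

/-- The conditional quantile `φ_α(x) = inf {y ≥ 0 : F(y|x) ≥ α}`. -/
def condQ (X : ℕ → Ω → (Fin p → ℝ)) (Y : ℕ → Ω → ℝ) (α : ℝ) (x : Fin p → ℝ) : ℝ :=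
  sInf {y : ℝ | 0 ≤ y ∧ α ≤ condF X Y x y}

open Classical in
/-- Empirical joint distribution function. -/
def empJointF (X : ℕ → Ω → (Fin p → ℝ)) (Y : ℕ → Ω → ℝ) (n : ℕ) (x : Fin p → ℝ) (y : ℝ)
    (ω : Ω) : ℝ :=
  (∑ i ∈ Finset.range n, if X i ω ≤ x ∧ Y i ω ≤ y then (1 : ℝ) else 0) / n

open Classical in
/-- Empirical marginal distribution function. -/
def empMargF (X : ℕ → Ω → (Fin p → ℝ)) (n : ℕ) (x : Fin p → ℝ) (ω : Ω) : ℝ :=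
  (∑ i ∈ Finset.range n, if X i ω ≤ x then (1 : ℝ) else 0) / n

/-- Empirical conditional distribution function. -/
def empCondF (X : ℕ → Ω → (Fin p → ℝ)) (Y : ℕ → Ω → ℝ) (n : ℕ) (x : Fin p → ℝ) (y : ℝ)
    (ω : Ω) : ℝ :=
  empJointF X Y n x y ω / empMargF X n x ω

/-- Empirical conditional quantile `φ̂_α(x)`. -/
def empCondQ (X : ℕ → Ω → (Fin p → ℝ)) (Y : ℕ → Ω → ℝ) (n : ℕ) (α : ℝ) (x : Fin p → ℝ)
    (ω : Ω) : ℝ :=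
  sInf {y : ℝ | 0 ≤ y ∧ α ≤ empCondF X Y n x y ω}

/-- The FDH estimator `φ̂_1(x) = max {Y_i : X_i ≤ x, i < n}`. -/
def fdh (X : ℕ → Ω → (Fin p → ℝ)) (Y : ℕ → Ω → ℝ) (n : ℕ) (x : Fin p → ℝ) (ω : Ω) : ℝ :=
  sSup {y : ℝ | ∃ i < n, X i ω ≤ x ∧ Y i ω = y}

/-- The data `(X_i, Y_i)` are i.i.d. copies of `(X 0, Y 0)`. -/
def IID (X : ℕ → Ω → (Fin p → ℝ)) (Y : ℕ → Ω → ℝ) : Prop :=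
  (∀ i, Measurable fun ω => (X i ω, Y i ω)) ∧
  iIndepFun (m := fun _ => inferInstance) (fun i ω => (X i ω, Y i ω)) ℙ ∧
  ∀ i, IdentDistrib (fun ω => (X i ω, Y i ω)) (fun ω => (X 0 ω, Y 0 ω)) ℙ ℙ

/-- `G` is a distribution function. -/
def IsCDF (G : ℝ → ℝ) : Prop :=
  Monotone G ∧ (∀ y, ContinuousWithinAt G (Ici y) y) ∧
    Tendsto G atBot (𝓝 0) ∧ Tendsto G atTop (𝓝 1)

/-- A distribution function is non-degenerate if it is not the distribution function of a
point mass. -/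
def NonDegenerate (G : ℝ → ℝ) : Prop :=
  ∃ y, 0 < G y ∧ G y < 1

/-- Convergence in distribution of real random variables towards the distribution
function `G`: convergence of the distribution functions at every continuity point of `G`. -/
def TendstoInDist (W : ℕ → Ω → ℝ) (G : ℝ → ℝ) : Prop :=
  ∀ y : ℝ, ContinuousAt G y →
    Tendsto (fun n => (ℙ {ω | W n ω ≤ y}).toReal) atTop (𝓝 (G y))

/-- The extreme-value Weibull distribution function `Ψ_ρ(y) = exp(-(-y)^ρ)` for `y ≤ 0`,
`= 1` for `y > 0`. -/
def PsiEV (ρ y : ℝ) : ℝ :=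
  if y ≤ 0 then Real.exp (-((-y) ^ ρ)) else 1

/-- The `Weibull(1,ρ)` distribution function: `W^ρ` is exponential with parameter 1. -/
def weibullCDF (ρ y : ℝ) : ℝ :=
  if 0 ≤ y then 1 - Real.exp (-(y ^ ρ)) else 0

/-- The distribution function of a centered normal distribution with variance `v`. -/
def normalCDF (v y : ℝ) : ℝ :=
  ((gaussianReal 0 (Real.toNNReal v)) (Iic y)).toReal

/-- Condition (2.2): `1 - F(φ(x) - 1/t | x)` is regularly varying with exponent `-ρ`. -/
def Cond22 (X : ℕ → Ω → (Fin p → ℝ)) (Y : ℕ → Ω → ℝ) (x : Fin p → ℝ) (ρ : ℝ) : Prop :=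
  ∀ z > 0, Tendsto
    (fun t => (1 - condF X Y x (phi X Y x - 1 / (t * z))) /
      (1 - condF X Y x (phi X Y x - 1 / t)))
    atTop (𝓝 (z ^ (-ρ)))

/-- Regular variation at infinity with index `τ`. -/
def RegVary (h : ℝ → ℝ) (τ : ℝ) : Prop :=
  ∀ z > 0, Tendsto (fun t => h (t * z) / h t) atTop (𝓝 (z ^ τ))

/-- Generalized inverse of a function `g : ℝ → ℝ`. -/
def genInv (g : ℝ → ℝ) (y : ℝ) : ℝ :=
  sInf {t : ℝ | y ≤ g t}

/-- Exact-power tail condition: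
`F_X(x)[1 - F(y|x)] = ℓ (φ(x) - y)^ρ` for all `y < φ(x)` close enough to `φ(x)`. -/
def ExactPowerTail (X : ℕ → Ω → (Fin p → ℝ)) (Y : ℕ → Ω → ℝ) (x : Fin p → ℝ)
    (ℓ ρ : ℝ) : Prop :=
  ∃ y₀ < phi X Y x, ∀ y, y₀ ≤ y → y < phi X Y x →
    margF X x * (1 - condF X Y x y) = ℓ * (phi X Y x - y) ^ ρ

/-- The function `U(t) = φ_{1 - 1/(t F_X(x))}(x)`. -/
def Ufun (X : ℕ → Ω → (Fin p → ℝ)) (Y : ℕ → Ω → ℝ) (x : Fin p → ℝ) (t : ℝ) : ℝ :=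
  condQ X Y (1 - 1 / (t * margF X x)) x

/-- The Pickands-type estimator `ρ̂_x` with threshold `k`. -/
def pickands (X : ℕ → Ω → (Fin p → ℝ)) (Y : ℕ → Ω → ℝ) (n k : ℕ) (x : Fin p → ℝ)
    (ω : Ω) : ℝ :=
  Real.log 2 / Real.log
    ((empCondQ X Y n (1 - (2 * (k : ℝ) - 1) / ((n : ℝ) * empMargF X n x ω)) x ω -
        empCondQ X Y n (1 - (4 * (k : ℝ) - 1) / ((n : ℝ) * empMargF X n x ω)) x ω) /
      (empCondQ X Y n (1 - ((k : ℝ) - 1) / ((n : ℝ) * empMargF X n x ω)) x ω -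
        empCondQ X Y n (1 - (2 * (k : ℝ) - 1) / ((n : ℝ) * empMargF X n x ω)) x ω))

/-- The statistic `M^{(j)}_n`. -/
def Mstat (X : ℕ → Ω → (Fin p → ℝ)) (Y : ℕ → Ω → ℝ) (n k j : ℕ) (x : Fin p → ℝ)
    (ω : Ω) : ℝ :=
  (∑ i ∈ Finset.range k,
      (Real.log (empCondQ X Y n (1 - (i : ℝ) / ((n : ℝ) * empMargF X n x ω)) x ω) -
        Real.log (empCondQ X Y n (1 - (k : ℝ) / ((n : ℝ) * empMargF X n x ω)) x ω)) ^ j) / k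

/-- The moment-type estimator `ρ̃_x` with threshold `k`. -/
def momentEst (X : ℕ → Ω → (Fin p → ℝ)) (Y : ℕ → Ω → ℝ) (n k : ℕ) (x : Fin p → ℝ)
    (ω : Ω) : ℝ :=
  -(Mstat X Y n k 1 x ω + 1 -
      (1 / 2) * (1 - (Mstat X Y n k 1 x ω) ^ 2 / Mstat X Y n k 2 x ω)⁻¹)⁻¹

/-!
Write `Zₙ = φ(x) - φ̂₁(x)`. Since `φ̂₁(x) ≤ c` exactly when no observation with `Xᵢ ≤ x` has
`Yᵢ > c`, independence and the tail condition give `P(Zₙ ≥ s) = (1 - ℓ s^ρ)^n` for small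
`s > 0`, while `0 ≤ Zₙ ≤ φ(x)` almost surely. By the layer-cake formula
`E[Zₙ^k] = k ∫₀^∞ s^(k-1) P(Zₙ ≥ s) ds`; after the substitution `s = n^(-1/ρ) u` the integrand
converges to `u^(k-1) exp(-ℓ u^ρ)` and is dominated by `u^(k-1) exp(-c u^ρ)`, so
`n^(k/ρ) E[Zₙ^k] → k ∫₀^∞ u^(k-1) exp(-ℓ u^ρ) du = k ρ⁻¹ ℓ^(-k/ρ) Γ(k/ρ)`.
-/

lemma one_sub_pow_le_exp_neg_mul {a : ℝ} (ha : a ≤ 1) (n : ℕ) :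
    (1 - a) ^ n ≤ Real.exp (-(n * a)) := by
  calc (1 - a) ^ n ≤ Real.exp (-a) ^ n :=
        pow_le_pow_left₀ (by linarith) (Real.one_sub_le_exp_neg a) n
    _ = Real.exp (-(n * a)) := by rw [← Real.exp_nat_mul]; ring_nf

lemma mul_rpow_neg_inv_mul_rpow {n v ρ : ℝ} (hn : 0 < n) (hv : 0 ≤ v) (hρ : ρ ≠ 0) :
    n * (n ^ (-ρ⁻¹) * v) ^ ρ = v ^ ρ := by
  rw [Real.mul_rpow (by positivity) hv, ← Real.rpow_mul hn.le, neg_mul, inv_mul_cancel₀ hρ,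
    Real.rpow_neg_one, mul_inv_cancel_left₀ hn.ne']

lemma setIntegral_Ioi_rpow_mul_comp_mul_left {a : ℝ} (ha : 0 < a) (r : ℝ) (g : ℝ → ℝ) :
    ∫ u in Ioi (0 : ℝ), u ^ (r - 1) * g (a * u) =
      a ^ (-r) * ∫ s in Ioi (0 : ℝ), s ^ (r - 1) * g s := by
  have hsubst := integral_comp_mul_left_Ioi (fun s => s ^ (r - 1) * g s) 0 ha
  rw [mul_zero, smul_eq_mul] at hsubst
  have hfactor : ∫ u in Ioi (0 : ℝ), (a * u) ^ (r - 1) * g (a * u) =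
      a ^ (r - 1) * ∫ u in Ioi (0 : ℝ), u ^ (r - 1) * g (a * u) := by
    rw [← integral_const_mul]
    refine setIntegral_congr_fun measurableSet_Ioi fun u hu => ?_
    rw [Real.mul_rpow ha.le (le_of_lt hu), mul_assoc]
  calc ∫ u in Ioi (0 : ℝ), u ^ (r - 1) * g (a * u)
      = a ^ (-(r - 1)) * (a ^ (r - 1) * ∫ u in Ioi (0 : ℝ), u ^ (r - 1) * g (a * u)) := by
        rw [← mul_assoc, ← Real.rpow_add ha, neg_add_cancel, Real.rpow_zero, one_mul]
    _ = a ^ (-(r - 1)) * (a ^ (-1 : ℝ) * ∫ s in Ioi (0 : ℝ), s ^ (r - 1) * g s) := by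
        rw [← hfactor, hsubst, Real.rpow_neg_one]
    _ = a ^ (-r) * ∫ s in Ioi (0 : ℝ), s ^ (r - 1) * g s := by
        rw [← mul_assoc, ← Real.rpow_add ha]; ring_nf

lemma isLittleO_sub_mul_rpow_neg_of_tendsto {f : ℕ → ℝ} {a L : ℝ}
    (h : Tendsto (fun n : ℕ => (n : ℝ) ^ a * f n) atTop (𝓝 L)) :
    (fun n : ℕ => f n - L * (n : ℝ) ^ (-a)) =o[atTop] fun n : ℕ => (n : ℝ) ^ (-a) := by
  have hpos : ∀ᶠ n : ℕ in atTop, (0 : ℝ) < n := eventually_gt_atTop 0 |>.mono fun n hn => by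
    exact_mod_cast hn
  rw [isLittleO_iff_tendsto' (hpos.mono fun n hn h0 => absurd h0 (by positivity)), ← sub_self L]
  refine (h.sub_const L).congr' (hpos.mono fun n hn => ?_)
  dsimp only
  rw [Real.rpow_neg hn.le, sub_div, mul_div_assoc, div_self (by positivity), mul_one,
    div_inv_eq_mul, mul_comm]

/-- `Q n` behaves like `s ↦ P(min(W₁, …, Wₙ) ≥ s)` for i.i.d. `Wᵢ ∈ [0, M]` with
`P(W ≥ s) = 1 - ℓ s ^ ρ` for `0 < s ≤ t`. -/
structure PowerTailSurvival (Q : ℕ → ℝ → ℝ) (ℓ ρ t M : ℝ) : Prop where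
  antitone : ∀ n, Antitone (Q n)
  eq_one_sub_pow : ∀ n s, 0 < s → s ≤ t → Q n s = (1 - ℓ * s ^ ρ) ^ n
  eq_zero : ∀ n s, M < s → Q n s = 0

namespace PowerTailSurvival

variable {Q : ℕ → ℝ → ℝ} {ℓ ρ t M : ℝ}

lemma nonneg (hQ : PowerTailSurvival Q ℓ ρ t M) (n : ℕ) (s : ℝ) : 0 ≤ Q n s :=
  calc 0 = Q n (max s M + 1) := (hQ.eq_zero n _ (by linarith [le_max_right s M])).symm
    _ ≤ Q n s := hQ.antitone n (by linarith [le_max_left s M])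

lemma le_exp (hQ : PowerTailSurvival Q ℓ ρ t M) (hℓ : 0 ≤ ℓ) (hρ : 0 < ρ) (ht : 0 < t)
    (htM : t ≤ M) (n : ℕ) {s : ℝ} (hs : 0 < s) :
    Q n s ≤ Real.exp (-(ℓ * (t / M) ^ ρ) * (n * s ^ ρ)) := by
  rcases le_or_gt s M with hsM | hMs
  · set m := min s t
    have hm : 0 < m := lt_min hs ht
    have hM : 0 < M := ht.trans_le htM
    -- the constant `ℓ (t / M) ^ ρ` comes from `t s / M ≤ min s t` for `s ≤ M`
    have hscaled : t * s / M ≤ m := by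
      refine le_min ?_ ?_ <;> rw [div_le_iff₀ hM] <;> nlinarith
    have hlm : ℓ * m ^ ρ ≤ 1 := by
      have hQ1 := hQ.nonneg 1 m
      rw [hQ.eq_one_sub_pow 1 m hm (min_le_right _ _), pow_one] at hQ1
      linarith
    calc Q n s ≤ Q n m := hQ.antitone n (min_le_left _ _)
      _ = (1 - ℓ * m ^ ρ) ^ n := hQ.eq_one_sub_pow n m hm (min_le_right _ _)
      _ ≤ Real.exp (-(n * (ℓ * m ^ ρ))) := one_sub_pow_le_exp_neg_mul hlm n
      _ ≤ Real.exp (-(n * (ℓ * (t * s / M) ^ ρ))) := by gcongr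
      _ = Real.exp (-(ℓ * (t / M) ^ ρ) * (n * s ^ ρ)) := by
        rw [mul_div_right_comm, Real.mul_rpow (by positivity) hs.le]; ring_nf
  · rw [hQ.eq_zero n s hMs]
    positivity

lemma tendsto_rescaled (hQ : PowerTailSurvival Q ℓ ρ t M) (hρ : 0 < ρ) (ht : 0 < t) {u : ℝ}
    (hu : 0 < u) :
    Tendsto (fun n : ℕ => Q n ((n : ℝ) ^ (-ρ⁻¹) * u)) atTop (𝓝 (Real.exp (-ℓ * u ^ ρ))) := by
  have hscale : Tendsto (fun n : ℕ => (n : ℝ) ^ (-ρ⁻¹) * u) atTop (𝓝 0) := by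
    simpa using ((tendsto_rpow_neg_atTop (inv_pos.2 hρ)).comp
      tendsto_natCast_atTop_atTop).mul_const u
  refine (Real.tendsto_one_add_div_pow_exp (-ℓ * u ^ ρ)).congr' ?_
  filter_upwards [hscale.eventually (ge_mem_nhds ht), eventually_gt_atTop 0] with n hnt hn
  have hn : (0 : ℝ) < n := by exact_mod_cast hn
  rw [hQ.eq_one_sub_pow n _ (by positivity) hnt, ← mul_rpow_neg_inv_mul_rpow hn hu.le hρ.ne']
  field_simp
  ring

lemma tendsto_rpow_mul_integral (hQ : PowerTailSurvival Q ℓ ρ t M) (hℓ : 0 < ℓ) (hρ : 0 < ρ)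
    (ht : 0 < t) (htM : t ≤ M) {r : ℝ} (hr : 0 < r) :
    Tendsto (fun n : ℕ => (n : ℝ) ^ (r / ρ) * ∫ s in Ioi (0 : ℝ), s ^ (r - 1) * Q n s) atTop
      (𝓝 (ℓ ^ (-r / ρ) * (1 / ρ) * Real.Gamma (r / ρ))) := by
  have hb : 0 < ℓ * (t / M) ^ ρ := by
    have hM : 0 < M := ht.trans_le htM
    positivity
  have hlimit := integral_rpow_mul_exp_neg_mul_rpow hρ (q := r - 1) (by linarith) hℓ
  rw [sub_add_cancel] at hlimit
  rw [← hlimit]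
  refine (tendsto_integral_filter_of_dominated_convergence
    (F := fun n u => u ^ (r - 1) * Q n ((n : ℝ) ^ (-ρ⁻¹) * u))
    (fun u => u ^ (r - 1) * Real.exp (-(ℓ * (t / M) ^ ρ) * u ^ ρ)) ?_ ?_
    (integrableOn_rpow_mul_exp_neg_mul_rpow (by linarith) hρ hb) ?_).congr' ?_
  · refine Eventually.of_forall fun n => Measurable.aestronglyMeasurable ?_
    exact (measurable_id.pow_const _).mul
      ((hQ.antitone n).measurable.comp (measurable_const_mul _))
  · filter_upwards [eventually_gt_atTop 0] with n hn
    have hn : (0 : ℝ) < n := by exact_mod_cast hn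
    rw [ae_restrict_iff' measurableSet_Ioi]
    refine Eventually.of_forall fun u (hu : 0 < u) => ?_
    rw [Real.norm_of_nonneg (mul_nonneg (by positivity) (hQ.nonneg _ _))]
    gcongr
    have hbound := hQ.le_exp hℓ.le hρ ht htM n (s := (n : ℝ) ^ (-ρ⁻¹) * u) (by positivity)
    rwa [mul_rpow_neg_inv_mul_rpow hn hu.le hρ.ne'] at hbound
  · rw [ae_restrict_iff' measurableSet_Ioi]
    exact Eventually.of_forall fun u hu => (hQ.tendsto_rescaled hρ ht hu).const_mul _
  · filter_upwards [eventually_gt_atTop 0] with n hn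
    have hn : (0 : ℝ) < n := by exact_mod_cast hn
    rw [setIntegral_Ioi_rpow_mul_comp_mul_left (by positivity), ← Real.rpow_mul hn.le]
    ring_nf

end PowerTailSurvival

lemma integral_pow_eq_mul_integral_Ioi_measureReal_le {α : Type*} [MeasurableSpace α]
    {μ : Measure α} {Z : α → ℝ} {k : ℕ} (hk : k ≠ 0) (hint : Integrable (fun a => Z a ^ k) μ)
    (hZ : 0 ≤ᵐ[μ] Z) :
    ∫ a, Z a ^ k ∂μ = k * ∫ s in Ioi (0 : ℝ), s ^ ((k : ℝ) - 1) * μ.real {a | s ≤ Z a} := by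
  have hk' : (0 : ℝ) < k := by exact_mod_cast Nat.pos_of_ne_zero hk
  rw [hint.integral_eq_integral_meas_le (hZ.mono fun a ha => pow_nonneg ha k),
    ← integral_comp_rpow_Ioi_of_pos (g := fun s => μ.real {a | s ≤ Z a ^ k}) hk',
    ← integral_const_mul]
  refine setIntegral_congr_fun measurableSet_Ioi fun s (hs : 0 < s) => ?_
  rw [smul_eq_mul, mul_assoc]
  congr 2
  refine measureReal_congr (hZ.mono fun a ha => propext ?_)
  change s ^ (k : ℝ) ≤ Z a ^ k ↔ s ≤ Z a
  rw [Real.rpow_natCast]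
  exact pow_le_pow_iff_left₀ hs.le ha hk

section FDH

variable {α : Type*} {X : ℕ → α → (Fin p → ℝ)} {Y : ℕ → α → ℝ} {x : Fin p → ℝ}

lemma bddAbove_fdh_set (n : ℕ) (ω : α) : BddAbove {y : ℝ | ∃ i < n, X i ω ≤ x ∧ Y i ω = y} :=
  ((Set.finite_Iio n).image fun i => Y i ω).bddAbove.mono <| by
    rintro _ ⟨i, hi, -, rfl⟩
    exact ⟨i, hi, rfl⟩

lemma fdh_le_iff {n : ℕ} {ω : α} {c : ℝ} (hc : 0 ≤ c) :
    fdh X Y n x ω ≤ c ↔ ∀ i < n, X i ω ≤ x → Y i ω ≤ c := by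
  refine ⟨fun h i hi hX => (le_csSup (bddAbove_fdh_set n ω) ⟨i, hi, hX, rfl⟩).trans h,
    fun h => Real.sSup_le ?_ hc⟩
  rintro _ ⟨i, hi, hX, rfl⟩
  exact h i hi hX

lemma fdh_nonneg {n : ℕ} {ω : α} (hY : ∀ i, 0 ≤ Y i ω) : 0 ≤ fdh X Y n x ω :=
  Real.sSup_nonneg <| by
    rintro _ ⟨i, -, -, rfl⟩
    exact hY i

lemma fdh_eq_iSup_indicator {n : ℕ} {ω : α} (hY : ∀ i, 0 ≤ Y i ω) :
    fdh X Y n x ω = ⨆ i : Fin n, {ω | X i ω ≤ x}.indicator (Y i) ω := by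
  refine le_antisymm (Real.sSup_le ?_ (Real.iSup_nonneg fun i => ?_))
    (Real.iSup_le (fun i => ?_) (fdh_nonneg hY))
  · rintro _ ⟨i, hi, hX, rfl⟩
    refine le_ciSup_of_le (Set.finite_range _).bddAbove ⟨i, hi⟩ ?_
    rw [Set.indicator_of_mem (show ω ∈ {ω | X i ω ≤ x} from hX)]
  · exact Set.indicator_nonneg (fun ω _ => hY i) ω
  · by_cases hX : X i ω ≤ x
    · rw [Set.indicator_of_mem (show ω ∈ {ω | X i ω ≤ x} from hX)]
      exact le_csSup (bddAbove_fdh_set n ω) ⟨i, i.2, hX, rfl⟩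
    · rw [Set.indicator_of_notMem hX]
      exact fdh_nonneg hY

lemma aemeasurable_fdh [MeasurableSpace α] {μ : Measure α} (hX : ∀ i, Measurable (X i))
    (hY : ∀ i, Measurable (Y i)) (hY0 : ∀ᵐ ω ∂μ, ∀ i, 0 ≤ Y i ω) (n : ℕ) :
    AEMeasurable (fdh X Y n x) μ :=
  (Measurable.iSup fun i : Fin n => (hY i).indicator (hX i measurableSet_Iic)).aemeasurable.congr
    (hY0.mono fun _ h => (fdh_eq_iSup_indicator h).symm)

lemma integral_sub_fdh_pow [MeasurableSpace α] {μ : Measure α} [IsFiniteMeasure μ]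
    (hX : ∀ i, Measurable (X i)) (hY : ∀ i, Measurable (Y i)) (hY0 : ∀ᵐ ω ∂μ, ∀ i, 0 ≤ Y i ω)
    {n k : ℕ} (hk : k ≠ 0) {c : ℝ} (hle : ∀ᵐ ω ∂μ, fdh X Y n x ω ≤ c) :
    ∫ ω, (c - fdh X Y n x ω) ^ k ∂μ =
      k * ∫ s in Ioi (0 : ℝ), s ^ ((k : ℝ) - 1) * μ.real {ω | s ≤ c - fdh X Y n x ω} := by
  refine integral_pow_eq_mul_integral_Ioi_measureReal_le hk ?_
    (hle.mono fun ω h => sub_nonneg.2 h)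
  refine .of_bound (((aemeasurable_fdh hX hY hY0 n).const_sub c).pow_const k).aestronglyMeasurable
    (c ^ k) ?_
  filter_upwards [hle, hY0] with ω hle hY0
  rw [Real.norm_of_nonneg (pow_nonneg (sub_nonneg.2 hle) k)]
  exact pow_le_pow_left₀ (sub_nonneg.2 hle) (sub_le_self _ (fdh_nonneg hY0)) k

end FDH

section Sample

variable {X : ℕ → Ω → (Fin p → ℝ)} {Y : ℕ → Ω → ℝ} {x : Fin p → ℝ}

lemma jointF_eq_zero_of_neg (hY : ∀ᵐ ω ∂ℙ, 0 ≤ Y 0 ω) {y : ℝ} (hy : y < 0) :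
    jointF X Y x y = 0 := by
  have hnull : ℙ {ω | X 0 ω ≤ x ∧ Y 0 ω ≤ y} = 0 := by
    refine measure_mono_null (fun ω h => ?_) (ae_iff.1 hY)
    exact not_le.2 (h.2.trans_lt hy)
  rw [jointF, hnull, ENNReal.toReal_zero]

lemma phi_pos (hY : ∀ᵐ ω ∂ℙ, 0 ≤ Y 0 ω) {ℓ ρ : ℝ} (hℓ : 0 < ℓ) (hρ : 0 < ρ)
    (htail : ExactPowerTail X Y x ℓ ρ) : 0 < phi X Y x := by
  obtain ⟨y₀, hy₀, hpow⟩ := htail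
  by_contra! hφ
  -- below `0` we have `F(y|x) = 0`, so the tail identity would make `ℓ (φ - y)^ρ` constant
  have hconst : ∀ y, y₀ ≤ y → y < phi X Y x → ℓ * (phi X Y x - y) ^ ρ = margF X x := by
    intro y hy₀y hyφ
    rw [← hpow y hy₀y hyφ, condF, jointF_eq_zero_of_neg hY (hyφ.trans_le hφ), zero_div,
      sub_zero, mul_one]
  have hmid := hconst ((y₀ + phi X Y x) / 2) (by linarith) (by linarith)
  have hlt : (phi X Y x - (y₀ + phi X Y x) / 2) ^ ρ < (phi X Y x - y₀) ^ ρ :=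
    Real.rpow_lt_rpow (by linarith) (by linarith) hρ
  nlinarith [hconst y₀ le_rfl hy₀]

lemma measureReal_upper_tail [IsFiniteMeasure (ℙ : Measure Ω)]
    (hXY : Measurable fun ω => (X 0 ω, Y 0 ω)) (c : ℝ) :
    (ℙ : Measure Ω).real {ω | X 0 ω ≤ x ∧ c < Y 0 ω} = margF X x - jointF X Y x c := by
  have hsplit : {ω | X 0 ω ≤ x ∧ c < Y 0 ω} =
      {ω | X 0 ω ≤ x} \ {ω | X 0 ω ≤ x ∧ Y 0 ω ≤ c} := by
    ext ω
    simp only [Set.mem_sdiff, mem_ofPred_eq, not_and, not_le]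
    tauto
  have hmeas : MeasurableSet {ω | X 0 ω ≤ x ∧ Y 0 ω ≤ c} :=
    hXY (measurableSet_Iic.prod measurableSet_Iic)
  rw [hsplit, measureReal_sdiff (s₁ := {ω | X 0 ω ≤ x}) (fun ω h => h.1) hmeas]
  rfl

lemma measureReal_upper_tail_eq [IsFiniteMeasure (ℙ : Measure Ω)]
    (hXY : Measurable fun ω => (X 0 ω, Y 0 ω)) (hx : margF X x ≠ 0) {y₀ ℓ ρ : ℝ}
    (hpow : ∀ y, y₀ ≤ y → y < phi X Y x →
      margF X x * (1 - condF X Y x y) = ℓ * (phi X Y x - y) ^ ρ) {c : ℝ} (hc : y₀ ≤ c)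
    (hcφ : c < phi X Y x) :
    (ℙ : Measure Ω).real {ω | X 0 ω ≤ x ∧ c < Y 0 ω} = ℓ * (phi X Y x - c) ^ ρ := by
  rw [measureReal_upper_tail hXY, ← hpow c hc hcφ, condF, mul_sub, mul_one, mul_div_cancel₀ _ hx]

lemma ae_forall_nonneg_of_iid (hiid : IID X Y) (hY : ∀ᵐ ω ∂ℙ, 0 ≤ Y 0 ω) :
    ∀ᵐ ω ∂ℙ, ∀ i, 0 ≤ Y i ω :=
  ae_all_iff.2 fun i => (hiid.2.2 i).symm.ae_mem_snd (measurable_snd measurableSet_Ici) hY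

lemma measure_fdh_le [IsProbabilityMeasure (ℙ : Measure Ω)] (hiid : IID X Y) {c : ℝ}
    (hc : 0 ≤ c) (n : ℕ) :
    ℙ {ω | fdh X Y n x ω ≤ c} = (1 - ℙ {ω | X 0 ω ≤ x ∧ c < Y 0 ω}) ^ n := by
  have hB : MeasurableSet (Iic x ×ˢ Ioi c) := measurableSet_Iic.prod measurableSet_Ioi
  have hevent : {ω | fdh X Y n x ω ≤ c} =
      ⋂ i ∈ Finset.range n, (fun ω => (X i ω, Y i ω)) ⁻¹' (Iic x ×ˢ Ioi c)ᶜ := by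
    ext ω
    simp [fdh_le_iff hc]
  have hfactor : ∀ i, ℙ ((fun ω => (X i ω, Y i ω)) ⁻¹' (Iic x ×ˢ Ioi c)ᶜ) =
      1 - ℙ {ω | X 0 ω ≤ x ∧ c < Y 0 ω} := fun i => by
    rw [preimage_compl, measure_compl (hiid.1 i hB) (measure_ne_top _ _), measure_univ,
      (hiid.2.2 i).measure_mem_eq hB]
    rfl
  rw [hevent, hiid.2.1.measure_inter_preimage_eq_mul _ fun i _ => hB.compl,
    Finset.prod_congr rfl fun i _ => hfactor i, Finset.prod_const, Finset.card_range]

lemma ae_fdh_le (hiid : IID X Y) {c : ℝ} (hc : 0 ≤ c)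
    (hnull : ℙ {ω | X 0 ω ≤ x ∧ c < Y 0 ω} = 0) (n : ℕ) : ∀ᵐ ω ∂ℙ, fdh X Y n x ω ≤ c := by
  have hB : MeasurableSet (Iic x ×ˢ Ioi c) := measurableSet_Iic.prod measurableSet_Ioi
  have hnull_i : ∀ i, ℙ ((fun ω => (X i ω, Y i ω)) ⁻¹' (Iic x ×ˢ Ioi c)) = 0 :=
    fun i => ((hiid.2.2 i).measure_mem_eq hB).trans hnull
  rw [ae_iff]
  refine measure_mono_null (fun ω hω => ?_) (measure_iUnion_null hnull_i)
  simp only [mem_ofPred_eq, fdh_le_iff hc, not_forall, not_le] at hω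
  obtain ⟨i, -, hX, hY⟩ := hω
  exact mem_iUnion.2 ⟨i, hX, hY⟩

lemma measure_upper_tail_phi_eq_zero [IsFiniteMeasure (ℙ : Measure Ω)]
    (hXY : Measurable fun ω => (X 0 ω, Y 0 ω)) (hx : margF X x ≠ 0) {y₀ ℓ ρ : ℝ} (hρ : 0 < ρ)
    (hy₀ : y₀ < phi X Y x)
    (hpow : ∀ y, y₀ ≤ y → y < phi X Y x →
      margF X x * (1 - condF X Y x y) = ℓ * (phi X Y x - y) ^ ρ) :
    ℙ {ω | X 0 ω ≤ x ∧ phi X Y x < Y 0 ω} = 0 := by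
  have hlim : Tendsto (fun s : ℝ => ℓ * s ^ ρ) (𝓝[>] 0) (𝓝 0) := by
    have := ((Real.continuousAt_rpow_const 0 ρ (Or.inr hρ.le)).tendsto.const_mul ℓ).mono_left
      (nhdsWithin_le_nhds (s := Ioi 0))
    simpa [Real.zero_rpow hρ.ne'] using this
  have hle : (ℙ : Measure Ω).real {ω | X 0 ω ≤ x ∧ phi X Y x < Y 0 ω} ≤ 0 := by
    refine ge_of_tendsto hlim ?_
    filter_upwards [Ioc_mem_nhdsGT (sub_pos.2 hy₀)] with s ⟨hs, hsφ⟩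
    calc (ℙ : Measure Ω).real {ω | X 0 ω ≤ x ∧ phi X Y x < Y 0 ω}
        ≤ (ℙ : Measure Ω).real {ω | X 0 ω ≤ x ∧ phi X Y x - s < Y 0 ω} :=
          measureReal_mono fun ω h => ⟨h.1, by linarith [h.2]⟩
      _ = ℓ * s ^ ρ := by
          rw [measureReal_upper_tail_eq hXY hx hpow (by linarith) (by linarith), sub_sub_cancel]
  exact (measureReal_eq_zero_iff (measure_ne_top _ _)).1 (le_antisymm hle measureReal_nonneg)

lemma powerTailSurvival_fdh [IsProbabilityMeasure (ℙ : Measure Ω)] (hiid : IID X Y)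
    (hY : ∀ᵐ ω ∂ℙ, ∀ i, 0 ≤ Y i ω) (hx : margF X x ≠ 0) {y₀ ℓ ρ : ℝ} (hy₀ : 0 ≤ y₀)
    (hpow : ∀ y, y₀ ≤ y → y < phi X Y x →
      margF X x * (1 - condF X Y x y) = ℓ * (phi X Y x - y) ^ ρ) :
    PowerTailSurvival (fun n s => (ℙ : Measure Ω).real {ω | s ≤ phi X Y x - fdh X Y n x ω})
      ℓ ρ (phi X Y x - y₀) (phi X Y x) where
  antitone n s s' hss' := measureReal_mono fun ω h => hss'.trans h
  eq_one_sub_pow n s hs hst := by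
    have hc : y₀ ≤ phi X Y x - s := by linarith
    simp_rw [le_sub_comm (a := s)]
    rw [measureReal_def, measure_fdh_le hiid (hy₀.trans hc), ENNReal.toReal_pow,
      ENNReal.toReal_sub_of_le prob_le_one ENNReal.one_ne_top, ENNReal.toReal_one,
      ← measureReal_def, measureReal_upper_tail_eq (hiid.1 0) hx hpow hc (by linarith),
      sub_sub_cancel]
  eq_zero n s hs := by
    have hneg : ℙ {ω | ¬ 0 ≤ fdh X Y n x ω} = 0 := ae_iff.1 (hY.mono fun ω h => fdh_nonneg h)
    refine (measureReal_eq_zero_iff (measure_ne_top _ _)).2 (measure_mono_null ?_ hneg)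
    intro ω (h : s ≤ _) (h0 : 0 ≤ fdh X Y n x ω)
    linarith

end Sample

theorem statement5_general
    [IsProbabilityMeasure (ℙ : Measure Ω)]
    (X : ℕ → Ω → (Fin p → ℝ)) (Y : ℕ → Ω → ℝ) (hiid : IID X Y)
    (hpos : ∀ᵐ ω ∂ℙ, (∀ i, 0 ≤ X 0 ω i) ∧ 0 ≤ Y 0 ω)
    (x : Fin p → ℝ) (hx : 0 < margF X x)
    (ℓ ρ : ℝ) (hℓ : 0 < ℓ) (hρ : 0 < ρ) (htail : ExactPowerTail X Y x ℓ ρ)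
    (β : ℝ) (hβ : β = ρ - ((p : ℝ) + 1)) :
    ∀ k : ℕ, 1 ≤ k →
      (fun n : ℕ => (∫ ω, (phi X Y x - fdh X Y n x ω) ^ k ∂ℙ) -
          (k : ℝ) * (β + p + 1)⁻¹ * ((n : ℝ) * ℓ) ^ (-(k : ℝ) / (β + p + 1)) *
            Real.Gamma ((k : ℝ) * (β + p + 1)⁻¹))
        =o[atTop] (fun n : ℕ => (n : ℝ) ^ (-(k : ℝ) / (β + p + 1))) := by
  intro k hk
  rw [show β + p + 1 = ρ by rw [hβ]; ring, neg_div]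
  have hY0 : ∀ᵐ ω ∂ℙ, 0 ≤ Y 0 ω := hpos.mono fun ω h => h.2
  have hY := ae_forall_nonneg_of_iid hiid hY0
  have hXm : ∀ i, Measurable (X i) := fun i => measurable_fst.comp (hiid.1 i)
  have hYm : ∀ i, Measurable (Y i) := fun i => measurable_snd.comp (hiid.1 i)
  have hφ := phi_pos hY0 hℓ hρ htail
  obtain ⟨y₀, hy₀, hpow⟩ := htail
  have hQ := powerTailSurvival_fdh hiid hY hx.ne' (le_max_right y₀ 0)
    fun y hy => hpow y (le_of_max_le_left hy)
  have hfdh_le := ae_fdh_le hiid hφ.le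
    (measure_upper_tail_phi_eq_zero (hiid.1 0) hx.ne' hρ hy₀ hpow)
  have hlim := (hQ.tendsto_rpow_mul_integral hℓ hρ (sub_pos.2 (max_lt hy₀ hφ))
    (sub_le_self _ (le_max_right _ _)) (Nat.cast_pos.2 hk)).const_mul (k : ℝ)
  refine (isLittleO_sub_mul_rpow_neg_of_tendsto
    (f := fun n => ∫ ω, (phi X Y x - fdh X Y n x ω) ^ k ∂ℙ) (hlim.congr fun n => ?_)).congr' ?_
    EventuallyEq.rfl
  · rw [integral_sub_fdh_pow hXm hYm hY (by omega) (hfdh_le n)]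
    ring
  · refine Eventually.of_forall fun n => ?_
    dsimp only
    rw [neg_div, Real.mul_rpow (Nat.cast_nonneg n) hℓ.le, div_eq_mul_inv (k : ℝ) ρ]
    ring

/-- Equation (2.5): moments of the FDH estimation error under the exact-power tail
condition, with `β_x = ρ_x - (p+1)`. -/
theorem statement5
    [IsProbabilityMeasure (ℙ : Measure Ω)]
    (X : ℕ → Ω → (Fin p → ℝ)) (Y : ℕ → Ω → ℝ) (hiid : IID X Y)
    (hpos : ∀ᵐ ω ∂ℙ, (∀ i, 0 ≤ X 0 ω i) ∧ 0 ≤ Y 0 ω)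
    (x : Fin p → ℝ) (hxpos : ∀ i, 0 ≤ x i) (hx : 0 < margF X x)
    (hphi : BddAbove {y : ℝ | 0 ≤ y ∧ condF X Y x y < 1})
    (ℓ ρ : ℝ) (hℓ : 0 < ℓ) (hρ : 0 < ρ) (htail : ExactPowerTail X Y x ℓ ρ)
    (β : ℝ) (hβ : β = ρ - ((p : ℝ) + 1)) :
    ∀ k : ℕ, 1 ≤ k →
      (fun n : ℕ => (∫ ω, (phi X Y x - fdh X Y n x ω) ^ k ∂ℙ) -
          (k : ℝ) * (β + p + 1)⁻¹ * ((n : ℝ) * ℓ) ^ (-(k : ℝ) / (β + p + 1)) *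
            Real.Gamma ((k : ℝ) * (β + p + 1)⁻¹))
        =o[atTop] (fun n : ℕ => (n : ℝ) ^ (-(k : ℝ) / (β + p + 1))) :=
  statement5_general X Y hiid hpos x hx ℓ ρ hℓ hρ htail β hβ

end FrontierEV
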